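/- arXiv:1103.3571 — 2 statements merged into one kernel-verified Lean document; each statement's English description precedes it below -/
import Mathlib

section
/- For all $t > 0$, $\sum_{k=1}^{\infty} e^{-\pi^2(k - 1/2)^2 t} = \frac{1}{\sqrt{\pi t}}\left(\frac{1}{2} + 2\sum_{k=1}^{\infty} e^{-4k^2/t} - \sum_{k=1}^{\infty} e^{-k^2/t}\right)$. -/
/-!
Poisson summation for the Gaussian, with quadratic coefficient `(π t)⁻¹` and imaginary linear
coefficient `-i/2`, gives `∑_{n ∈ ℤ} (-1)ⁿ e^{-n²/t} = √(π t) ∑_{n ∈ ℤ} e^{-π² (n + 1/2)² t}`.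
The right-hand sum is invariant under `n ↦ -1 - n`, so it is twice the sum of
`e^{-π² (k - 1/2)² t}` over `k ≥ 1`. The left-hand sum is `1 + 2 ∑_{k ≥ 1} (-1)ᵏ e^{-k²/t}`, and
adding and subtracting the even terms turns the alternating sum into
`2 ∑_{k ≥ 1} e^{-4k²/t} - ∑_{k ≥ 1} e^{-k²/t}`.
-/

open Real

section Alternating

variable {α : Type*} [Ring α] [UniformSpace α] [IsUniformAddGroup α] [CompleteSpace α]
  [T2Space α] {h : ℕ → α}

theorem tsum_neg_one_pow_mul_eq (hs : Summable h) :
    ∑' n, (-1) ^ n * h n = 2 * ∑' n, h (2 * n) - ∑' n, h n := by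
  have hdouble : Function.Injective (2 * · : ℕ → ℕ) := mul_right_injective₀ two_ne_zero
  have hsucc : Function.Injective (2 * · + 1 : ℕ → ℕ) := (add_left_injective 1).comp hdouble
  have halt := hs.alternating
  rw [← tsum_even_add_odd (f := h) (hs.comp_injective hdouble) (hs.comp_injective hsucc),
    ← tsum_even_add_odd (f := fun n ↦ (-1) ^ n * h n) (halt.comp_injective hdouble)
      (halt.comp_injective hsucc)]
  simp only [(even_two_mul _).neg_one_pow, (odd_two_mul_add_one _).neg_one_pow, one_mul,
    neg_one_mul, tsum_neg]
  rw [two_mul]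
  abel

theorem tsum_pnat_neg_one_pow_mul_eq (hs : Summable h) :
    ∑' k : ℕ+, (-1) ^ (k : ℕ) * h k = 2 * ∑' k : ℕ+, h (2 * k) - ∑' k : ℕ+, h k := by
  have hdouble : Function.Injective (2 * · : ℕ → ℕ) := mul_right_injective₀ two_ne_zero
  have hnat := tsum_neg_one_pow_mul_eq hs
  rw [← tsum_zero_pnat_eq_tsum_nat hs, ← tsum_zero_pnat_eq_tsum_nat hs.alternating,
    ← tsum_zero_pnat_eq_tsum_nat (f := fun n ↦ h (2 * n)) (hs.comp_injective hdouble)] at hnat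
  simp only [pow_zero, one_mul, mul_zero] at hnat
  rw [mul_add, two_mul (h 0)] at hnat
  exact add_left_cancel (hnat.trans (by abel))

end Alternating

theorem tsum_int_eq_two_mul_tsum_nat_of_neg_add_one {α : Type*} [NonAssocSemiring α]
    [TopologicalSpace α] [ContinuousAdd α] [T2Space α] {f : ℤ → α}
    (hf : ∀ n : ℕ, f (-(n + 1)) = f n) (hs : Summable fun n : ℕ ↦ f n) :
    ∑' n, f n = 2 * ∑' n : ℕ, f n := by
  rw [tsum_of_nat_of_neg_add_one hs (by simpa only [hf] using hs)]
  simp only [hf, two_mul]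

theorem summable_exp_neg_mul_nat_add_sq {c a : ℝ} (hc : 0 < c) (ha : 0 ≤ a) :
    Summable fun n : ℕ ↦ exp (-c * (n + a) ^ 2) :=
  summable_exp_nat_mul_of_ge (neg_lt_zero.2 hc) fun n ↦ by
    have : (n : ℝ) ≤ n ^ 2 := mod_cast Nat.le_self_pow two_ne_zero n
    nlinarith

theorem tsum_int_exp_neg_mul_add_half_sq {c : ℝ} (hc : 0 < c) :
    ∑' n : ℤ, exp (-c * (n + 1 / 2) ^ 2) = 2 * ∑' k : ℕ+, exp (-c * ((k : ℝ) - 1 / 2) ^ 2) := by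
  have hsymm (n : ℕ) : exp (-c * (((-(n + 1) : ℤ) : ℝ) + 1 / 2) ^ 2) =
      exp (-c * (((n : ℤ) : ℝ) + 1 / 2) ^ 2) := by
    push_cast; ring_nf
  have hs : Summable fun n : ℕ ↦ exp (-c * (((n : ℤ) : ℝ) + 1 / 2) ^ 2) := by
    simpa using summable_exp_neg_mul_nat_add_sq hc (a := 1 / 2) (by norm_num)
  rw [tsum_int_eq_two_mul_tsum_nat_of_neg_add_one
      (f := fun n : ℤ ↦ exp (-c * ((n : ℝ) + 1 / 2) ^ 2)) hsymm hs,
    tsum_pnat_eq_tsum_succ (f := fun k ↦ exp (-c * ((k : ℝ) - 1 / 2) ^ 2))]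
  exact congrArg _ (tsum_congr fun n ↦ by push_cast; ring_nf)

theorem tsum_int_neg_one_zpow_mul_exp_neg_sq_div_eq_tsum_pnat {t : ℝ} (ht : 0 < t) :
    ∑' n : ℤ, (-1 : ℝ) ^ n * exp (-(n : ℝ) ^ 2 / t) =
      1 + 2 * (2 * ∑' k : ℕ+, exp (-(4 * (k : ℝ) ^ 2) / t)
        - ∑' k : ℕ+, exp (-((k : ℝ) ^ 2) / t)) := by
  have hnat : Summable fun n : ℕ ↦ exp (-(n : ℝ) ^ 2 / t) := by
    simpa [div_eq_inv_mul] using summable_exp_neg_mul_nat_add_sq (inv_pos.2 ht) le_rfl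
  have hint : Summable fun n : ℤ ↦ (-1 : ℝ) ^ n * exp (-(n : ℝ) ^ 2 / t) := by
    refine Summable.of_norm ?_
    simp only [norm_mul, norm_zpow, norm_neg, norm_one, one_zpow, one_mul, norm_eq_abs, abs_exp]
    exact summable_int_iff_summable_nat_and_neg.2 ⟨by simpa using hnat, by simpa using hnat⟩
  have heven : Function.Even fun n : ℤ ↦ (-1 : ℝ) ^ n * exp (-(n : ℝ) ^ 2 / t) := fun n ↦ by
    simp only [Int.cast_neg, neg_sq, zpow_neg, ← inv_zpow, inv_neg, inv_one]
  have hdouble : ∑' k : ℕ+, exp (-(((2 * k : ℕ) : ℝ)) ^ 2 / t) =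
      ∑' k : ℕ+, exp (-(4 * (k : ℝ) ^ 2) / t) :=
    tsum_congr fun k ↦ by push_cast; ring_nf
  rw [tsum_int_eq_zero_add_two_mul_tsum_pnat heven hint]
  simp only [zpow_natCast, Int.cast_natCast, tsum_pnat_neg_one_pow_mul_eq hnat, hdouble]
  norm_num [nsmul_eq_mul]

theorem tsum_int_neg_one_zpow_mul_exp_neg_sq_div_eq_sqrt_mul {t : ℝ} (ht : 0 < t) :
    ∑' n : ℤ, (-1 : ℝ) ^ n * exp (-(n : ℝ) ^ 2 / t) =
      √(π * t) * ∑' n : ℤ, exp (-(π ^ 2 * t) * (n + 1 / 2) ^ 2) := by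
  have hπt : 0 < π * t := by positivity
  set a : ℝ := (π * t)⁻¹
  have ha : 0 < a := inv_pos.2 hπt
  have hpoisson := Complex.tsum_exp_neg_quadratic (a := a) (by simpa using ha) (-Complex.I / 2)
  have hlhs (n : ℤ) : Complex.exp (-π * a * n ^ 2 + 2 * π * (-Complex.I / 2) * n) =
      ((-1 : ℝ) ^ n * exp (-(n : ℝ) ^ 2 / t) : ℝ) := by
    have : -π * a * n ^ 2 + 2 * π * (-Complex.I / 2) * n =
        ((-(n : ℝ) ^ 2 / t : ℝ) : ℂ) + n * -(π * Complex.I) := by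
      simp only [a]; push_cast; field_simp
    rw [this, Complex.exp_add, Complex.exp_int_mul, Complex.exp_neg_pi_mul_I]
    push_cast [Complex.ofReal_exp]
    ring
  have hrhs (n : ℤ) : Complex.exp (-π / a * (n + Complex.I * (-Complex.I / 2)) ^ 2) =
      (exp (-(π ^ 2 * t) * (n + 1 / 2) ^ 2) : ℝ) := by
    have : Complex.I * (-Complex.I / 2) = 1 / 2 := by
      rw [mul_div_assoc', mul_neg, Complex.I_mul_I]; norm_num
    rw [this, Complex.ofReal_exp]
    simp only [a]; push_cast; field_simp
  have hfactor : 1 / (a : ℂ) ^ (1 / 2 : ℂ) = (√(π * t) : ℝ) := by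
    rw [← Complex.ofReal_one, ← Complex.ofReal_ofNat, ← Complex.ofReal_div,
      ← Complex.ofReal_cpow ha.le, ← sqrt_eq_rpow, sqrt_inv, ← Complex.ofReal_div, one_div,
      inv_inv]
  simp only [hlhs, hrhs, hfactor] at hpoisson
  exact_mod_cast hpoisson

/-- Poisson summation identity
∑_{k≥1} e^{-π²(k-1/2)²t} = (πt)^{-1/2} (1/2 + 2∑_{k≥1} e^{-4k²/t} - ∑_{k≥1} e^{-k²/t}). -/
theorem poisson_half_shift (t : ℝ) (ht : 0 < t) :
    ∑' k : ℕ+, Real.exp (-(Real.pi ^ 2) * ((k : ℝ) - 1 / 2) ^ 2 * t) =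
      (1 / Real.sqrt (Real.pi * t)) *
        (1 / 2 + 2 * ∑' k : ℕ+, Real.exp (-(4 * (k : ℝ) ^ 2) / t)
          - ∑' k : ℕ+, Real.exp (-((k : ℝ) ^ 2) / t)) := by
  have hpoisson := tsum_int_neg_one_zpow_mul_exp_neg_sq_div_eq_sqrt_mul ht
  rw [tsum_int_neg_one_zpow_mul_exp_neg_sq_div_eq_tsum_pnat ht,
    tsum_int_exp_neg_mul_add_half_sq (by positivity)] at hpoisson
  have hform : ∑' k : ℕ+, exp (-(π ^ 2) * ((k : ℝ) - 1 / 2) ^ 2 * t) =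
      ∑' k : ℕ+, exp (-(π ^ 2 * t) * ((k : ℝ) - 1 / 2) ^ 2) :=
    tsum_congr fun k ↦ by ring_nf
  have hsqrt : 0 < √(π * t) := by positivity
  rw [hform, one_div_mul_eq_div, eq_div_iff hsqrt.ne']
  linear_combination (-1 / 2 : ℝ) * hpoisson
end

section
/- Let $H$ be a finite-dimensional complex inner product space, $A$ an invertible self-adjoint operator on $H$, and $\gamma$ a unitary with $\gamma^2 = -\mathrm{Id}$, $\gamma A = -A\gamma$. Let $\Pi_>$ be the orthogonal projection onto the span of the positive eigenspaces of $A$. Then the image of $\Pi_>$ is a Lagrangian subspace of the symplectic vector space $(H, \omega)$ where $\omega(x, y) = \langle x, \gamma y\rangle$: that is, $\gamma(\mathrm{Im}\,\Pi_>) = (\mathrm{Im}\,\Pi_>)^{\perp}$. -/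
/-!
`γ` anticommutes with `A`, so it maps the `μ`-eigenspace of `A` into the `-μ`-eigenspace; with
`γ² = -1` this makes `γ` carry the positive spectral subspace `L` onto the negative one `N`.
Since `A` is self-adjoint and invertible, `N` is orthogonal to `L` and `N ⊔ L` is the whole space,
hence `N = Lᗮ` by the modular law.
-/

open Module End Set

namespace Submodule

variable {𝕜 E : Type*} [RCLike 𝕜] [NormedAddCommGroup E] [InnerProductSpace 𝕜 E]

theorem eq_orthogonal_of_isOrtho_of_sup_eq_top {L N : Submodule 𝕜 E} (hortho : N ⟂ L)
    (hsup : N ⊔ L = ⊤) : N = Lᗮ := by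
  calc N = N ⊔ L ⊓ Lᗮ := by rw [inf_orthogonal_eq_bot, sup_bot_eq]
    _ = (N ⊔ L) ⊓ Lᗮ := (sup_inf_assoc_of_le L hortho).symm
    _ = Lᗮ := by rw [hsup, top_inf_eq]

end Submodule

namespace LinearMap

section Anticommute

variable {R M : Type*} [CommRing R] [AddCommGroup M] [Module R M] {A γ : End R M}

theorem map_eigenspace_le_eigenspace_neg (hanti : ∀ v, γ (A v) = -A (γ v)) (μ : R) :
    (eigenspace A μ).map γ ≤ eigenspace A (-μ) := by
  rw [Submodule.map_le_iff_le_comap]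
  intro v hv
  rw [Submodule.mem_comap, mem_eigenspace_iff] at *
  rw [neg_smul, ← map_smul, ← hv, hanti, neg_neg]

theorem map_eq_of_sq_eq_neg_one (hsq : ∀ v, γ (γ v) = -v) {L N : Submodule R M}
    (hLN : L.map γ ≤ N) (hNL : N.map γ ≤ L) : L.map γ = N := by
  refine le_antisymm hLN fun w hw => ⟨-γ w, L.neg_mem (hNL ⟨w, hw, rfl⟩), ?_⟩
  rw [map_neg, hsq, neg_neg]

end Anticommute

section Spectral

variable {𝕜 E : Type*} [RCLike 𝕜] [NormedAddCommGroup E] [InnerProductSpace 𝕜 E]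

def spectralSubspace (A : E →ₗ[𝕜] E) (s : Set ℝ) : Submodule 𝕜 E :=
  ⨆ μ ∈ s, eigenspace A (μ : 𝕜)

variable {A : E →ₗ[𝕜] E}

theorem spectralSubspace_union (s t : Set ℝ) :
    A.spectralSubspace (s ∪ t) = A.spectralSubspace s ⊔ A.spectralSubspace t :=
  iSup_union

theorem spectralSubspace_zero : A.spectralSubspace {0} = ker A := by
  rw [spectralSubspace, iSup_singleton, RCLike.ofReal_zero, eigenspace_zero]

theorem map_spectralSubspace_le_neg {γ : E →ₗ[𝕜] E} (hanti : ∀ v, γ (A v) = -A (γ v))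
    (s : Set ℝ) : (A.spectralSubspace s).map γ ≤ A.spectralSubspace (-s) := by
  rw [Submodule.map_le_iff_le_comap]
  refine iSup₂_le fun μ hμ => Submodule.map_le_iff_le_comap.mp ?_
  refine (map_eigenspace_le_eigenspace_neg hanti _).trans ?_
  rw [← RCLike.ofReal_neg]
  exact le_iSup₂_of_le (-μ) (neg_mem_neg.mpr hμ) le_rfl

namespace IsSymmetric

theorem spectralSubspace_isOrtho (hA : A.IsSymmetric) {s t : Set ℝ} (hst : Disjoint s t) :
    A.spectralSubspace s ⟂ A.spectralSubspace t := by
  simp only [spectralSubspace, Submodule.isOrtho_iSup_left, Submodule.isOrtho_iSup_right]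
  intro ν hν μ hμ
  refine hA.orthogonalFamily_eigenspaces.isOrtho ?_
  exact_mod_cast hst.ne_of_mem hμ hν

theorem spectralSubspace_univ [FiniteDimensional 𝕜 E] (hA : A.IsSymmetric) :
    A.spectralSubspace univ = ⊤ := by
  rw [eq_top_iff,
    ← Submodule.orthogonal_eq_bot_iff.mp hA.orthogonalComplement_iSup_eigenspaces_eq_bot]
  refine iSup_le fun μ => ?_
  rcases eq_or_ne (eigenspace A μ) ⊥ with hbot | hne
  · exact hbot ▸ bot_le
  have hreal : (RCLike.re μ : 𝕜) = μ :=
    RCLike.conj_eq_iff_re.mp (hA.conj_eigenvalue_eq_self (hasEigenvalue_iff.mpr hne))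
  rw [← hreal]
  exact le_iSup₂_of_le (RCLike.re μ) (mem_univ _) le_rfl

theorem spectralSubspace_Iio_sup_Ioi [FiniteDimensional 𝕜 E] (hA : A.IsSymmetric)
    (hinj : Function.Injective A) :
    A.spectralSubspace (Iio 0) ⊔ A.spectralSubspace (Ioi 0) = ⊤ := by
  have hsplit : (univ : Set ℝ) = (Iio 0 ∪ Ioi 0) ∪ {0} := by
    rw [Iio_union_Ioi, compl_union_self]
  rw [← hA.spectralSubspace_univ, hsplit, spectralSubspace_union, spectralSubspace_union,
    spectralSubspace_zero, ker_eq_bot.mpr hinj, sup_bot_eq]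

end IsSymmetric

end Spectral

end LinearMap

theorem positive_spectral_subspace_lagrangian_general
    {H : Type*} [NormedAddCommGroup H] [InnerProductSpace ℂ H] [FiniteDimensional ℂ H]
    (A γ : H →ₗ[ℂ] H)
    (hA : ∀ x y : H, (inner ℂ (A x) y : ℂ) = inner ℂ x (A y))
    (hAinv : Function.Bijective A)
    (hsq : ∀ v, γ (γ v) = -v)
    (hanti : ∀ v, γ (A v) = -A (γ v)) :
    Submodule.map γ (⨆ (μ : ℝ) (_ : 0 < μ), Module.End.eigenspace A (μ : ℂ))
      = (⨆ (μ : ℝ) (_ : 0 < μ), Module.End.eigenspace A (μ : ℂ))ᗮ := by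
  have hsymm : A.IsSymmetric := hA
  change (A.spectralSubspace (Ioi 0)).map γ = (A.spectralSubspace (Ioi 0))ᗮ
  rw [← Submodule.eq_orthogonal_of_isOrtho_of_sup_eq_top
    (hsymm.spectralSubspace_isOrtho Iio_disjoint_Ioi_same)
    (hsymm.spectralSubspace_Iio_sup_Ioi hAinv.injective)]
  refine LinearMap.map_eq_of_sq_eq_neg_one hsq ?_ ?_
  · simpa only [neg_Ioi, neg_zero] using LinearMap.map_spectralSubspace_le_neg hanti (Ioi 0)
  · simpa only [neg_Iio, neg_zero] using LinearMap.map_spectralSubspace_le_neg hanti (Iio 0)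

/-- For an invertible self-adjoint A on a finite-dimensional complex inner product
space and a unitary γ with γ² = -Id anticommuting with A, the span L of the positive eigenspaces
of A satisfies γ(L) = L^⊥, i.e. L is Lagrangian for the symplectic form ⟨·, γ·⟩. -/
theorem positive_spectral_subspace_lagrangian
    {H : Type*} [NormedAddCommGroup H] [InnerProductSpace ℂ H] [FiniteDimensional ℂ H]
    (A γ : H →ₗ[ℂ] H)
    (hA : ∀ x y : H, (inner ℂ (A x) y : ℂ) = inner ℂ x (A y))
    (hAinv : Function.Bijective A)
    (hγ : ∀ x y : H, (inner ℂ (γ x) (γ y) : ℂ) = inner ℂ x y)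
    (hsq : ∀ v, γ (γ v) = -v)
    (hanti : ∀ v, γ (A v) = -A (γ v)) :
    Submodule.map γ (⨆ (μ : ℝ) (_ : 0 < μ), Module.End.eigenspace A (μ : ℂ))
      = (⨆ (μ : ℝ) (_ : 0 < μ), Module.End.eigenspace A (μ : ℂ))ᗮ :=
  positive_spectral_subspace_lagrangian_general A γ hA hAinv hsq hanti
end
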